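/- arXiv:1511.06049 — 7 statements merged into one kernel-verified Lean document; each statement's English description precedes it below -/
import Mathlib

section
/- Let λ > 0 and let v*(t,λ) = max(1 − t/λ, 0) for t ≥ 0. Then for every ℓ ≥ 0, ∫₀^ℓ v*(t,λ) dt equals ℓ − ℓ²/(2λ) if ℓ < λ and equals λ/2 if ℓ ≥ λ; that is, the latent SPL loss of the linear self-paced regularizer equals the minimax concave penalty p^MCP_{γ,λ}(ℓ) with γ = 1. -/
/-
On `[0, λ]` the weight `max (1 - t/λ) 0` is the affine function `1 - t/λ`, and beyond `λ` it
vanishes, so the integral up to `ℓ` is the integral of `1 - t/λ` up to `min ℓ λ`. That integral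
is `m - m²/(2λ)` at `m = min ℓ λ`, which at `m = λ` is the constant `λ/2` of the MCP.
-/

open intervalIntegral

theorem integral_one_sub_div (x c : ℝ) :
    ∫ t in (0 : ℝ)..x, (1 - t / c) = x - x ^ 2 / (2 * c) := by
  rw [integral_sub intervalIntegrable_const (intervalIntegrable_id.div_const c),
    integral_div, integral_const, integral_id, smul_eq_mul]
  ring

theorem integral_max_one_sub_div_zero_eq_min {c x : ℝ} (hc : 0 < c) (hx : 0 ≤ x) :
    ∫ t in (0 : ℝ)..x, max (1 - t / c) 0 = ∫ t in (0 : ℝ)..min x c, (1 - t / c) := by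
  have active : ∀ t ≤ c, max (1 - t / c) 0 = 1 - t / c := fun t ht =>
    max_eq_left (sub_nonneg.2 ((div_le_one hc).2 ht))
  have inactive : ∀ t ≥ c, max (1 - t / c) 0 = 0 := fun t ht =>
    max_eq_right (sub_nonpos.2 ((le_div_iff₀ hc).2 (by linarith)))
  rcases le_total x c with hxc | hcx
  · rw [min_eq_left hxc]
    refine integral_congr fun t ht => active t ?_
    rw [Set.uIcc_of_le hx] at ht
    exact ht.2.trans hxc
  · have hcont : Continuous fun t : ℝ => max (1 - t / c) 0 := by fun_prop
    rw [min_eq_right hcx, ← integral_add_adjacent_intervals (b := c)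
      (hcont.intervalIntegrable _ _) (hcont.intervalIntegrable _ _)]
    have head : ∫ t in (0 : ℝ)..c, max (1 - t / c) 0 = ∫ t in (0 : ℝ)..c, (1 - t / c) :=
      integral_congr fun t ht => active t (by rw [Set.uIcc_of_le hc.le] at ht; exact ht.2)
    have tail : ∫ t in c..x, max (1 - t / c) 0 = 0 := by
      rw [integral_congr (g := fun _ => (0 : ℝ)), integral_zero]
      intro t ht
      rw [Set.uIcc_of_le hcx] at ht
      exact inactive t ht.1
    rw [head, tail, add_zero]

/-- The latent SPL loss of the linear self-paced regularizer equals the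
minimax concave penalty (MCP) with `γ = 1`:
`∫₀^ℓ max(1 - t/λ, 0) dt = ℓ - ℓ²/(2λ)` if `ℓ < λ`, and `= λ/2` if `ℓ ≥ λ`. -/
theorem linear_sp_latent_loss_eq_MCP
    (lam : ℝ) (hlam : 0 < lam)
    (vstar : ℝ → ℝ) (hv : ∀ t, vstar t = max (1 - t / lam) 0) :
    ∀ ℓ : ℝ, 0 ≤ ℓ →
      (∫ t in (0 : ℝ)..ℓ, vstar t) =
        if ℓ < lam then ℓ - ℓ ^ 2 / (2 * lam) else lam / 2 := by
  intro ℓ hℓ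
  obtain rfl : vstar = fun t => max (1 - t / lam) 0 := funext hv
  rw [integral_max_one_sub_div_zero_eq_min hlam hℓ]
  split_ifs with h
  · rw [min_eq_left h.le, integral_one_sub_div]
  · rw [min_eq_right (not_lt.1 h), integral_one_sub_div]
    field_simp
    ring
end

section
/- Let λ > 0 and γ > 0, and define the mixture self-paced regularizer f^M(v,λ,γ) = γ²/(v + γ/λ). For every ℓ > 0, the minimizer over [0,1] of v ↦ vℓ + f^M(v,λ,γ) is: v = 1 if ℓ ≤ (λγ/(λ+γ))², v = 0 if ℓ ≥ λ², and v = γ(1/√ℓ − 1/λ) if (λγ/(λ+γ))² < ℓ < λ². -/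
/-!
Writing `c = γ/λ`, the objective `φ(v) = vℓ + γ²/(v + c)` satisfies
`φ(v) - φ(w) = (v - w)(ℓ - γ²/((v + c)(w + c)))`, so it increases on `[0, ∞)` once `ℓ ≥ γ²/c² = λ²`
and decreases on `(-c, 1]` once `ℓ ≤ γ²/(1 + c)² = (λγ/(λ+γ))²`. In between, AM-GM gives
`(v + c)ℓ + γ²/(v + c) ≥ 2γ√ℓ`, with equality at `v + c = γ/√ℓ`.
-/

open Set

/-- With `a = γ²` and `c = γ/λ` this is the objective of the mixture SP-regularizer. -/
noncomputable def mixtureObjective (a c ℓ v : ℝ) : ℝ := v * ℓ + a / (v + c)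

theorem mixtureObjective_sub_mixtureObjective (a c ℓ : ℝ) {v w : ℝ} (hv : v + c ≠ 0)
    (hw : w + c ≠ 0) :
    mixtureObjective a c ℓ v - mixtureObjective a c ℓ w
      = (v - w) * (ℓ - a / ((v + c) * (w + c))) := by
  unfold mixtureObjective
  field_simp
  ring

theorem isMinOn_mixtureObjective_Ioc {a c ℓ q : ℝ} (ha : 0 ≤ a) (hq : ℓ * (q + c) ^ 2 ≤ a) :
    IsMinOn (mixtureObjective a c ℓ) (Ioc (-c) q) q := by
  rw [isMinOn_iff]
  rintro v ⟨hcv, hvq⟩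
  have hvc : 0 < v + c := by linarith
  have hqc : 0 < q + c := by linarith
  have hℓ : ℓ ≤ a / ((v + c) * (q + c)) :=
    calc ℓ ≤ a / (q + c) ^ 2 := (le_div_iff₀ (by positivity)).2 hq
      _ ≤ a / ((v + c) * (q + c)) :=
        div_le_div_of_nonneg_left ha (by positivity) (by nlinarith)
  rw [← sub_nonneg, mixtureObjective_sub_mixtureObjective a c ℓ hvc.ne' hqc.ne']
  exact mul_nonneg_of_nonpos_of_nonpos (by linarith) (by linarith)

theorem isMinOn_mixtureObjective_Ici {a c ℓ p : ℝ} (ha : 0 ≤ a) (hp : 0 < p + c)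
    (hℓ : a ≤ ℓ * (p + c) ^ 2) :
    IsMinOn (mixtureObjective a c ℓ) (Ici p) p := by
  rw [isMinOn_iff]
  intro v (hpv : p ≤ v)
  have hvc : 0 < v + c := by linarith
  have hℓ' : a / ((v + c) * (p + c)) ≤ ℓ :=
    calc a / ((v + c) * (p + c)) ≤ a / (p + c) ^ 2 :=
          div_le_div_of_nonneg_left ha (by positivity) (by nlinarith)
      _ ≤ ℓ := (div_le_iff₀ (by positivity)).2 hℓ
  rw [← sub_nonneg, mixtureObjective_sub_mixtureObjective a c ℓ hvc.ne' hp.ne']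
  exact mul_nonneg (by linarith) (by linarith)

theorem two_mul_mul_le_mul_sq_add_sq_div {x : ℝ} (hx : 0 < x) (g s : ℝ) :
    2 * g * s ≤ x * s ^ 2 + g ^ 2 / x := by
  have h : x * s ^ 2 + g ^ 2 / x - 2 * g * s = (x * s - g) ^ 2 / x := by
    field_simp
    ring
  linarith [div_nonneg (sq_nonneg (x * s - g)) hx.le]

theorem isMinOn_mixtureObjective_Ioi {c ℓ g : ℝ} (hℓ : 0 < ℓ) :
    IsMinOn (mixtureObjective (g ^ 2) c ℓ) (Ioi (-c)) (g / √ℓ - c) := by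
  obtain ⟨s, hs, rfl⟩ : ∃ s, 0 < s ∧ ℓ = s ^ 2 :=
    ⟨√ℓ, Real.sqrt_pos.2 hℓ, (Real.sq_sqrt hℓ.le).symm⟩
  rw [Real.sqrt_sq hs.le, isMinOn_iff]
  intro v (hcv : -c < v)
  have hmin : mixtureObjective (g ^ 2) c (s ^ 2) (g / s - c) = 2 * g * s - c * s ^ 2 := by
    unfold mixtureObjective
    rw [sub_add_cancel]
    field_simp
    ring
  have hamgm := two_mul_mul_le_mul_sq_add_sq_div (x := v + c) (by linarith) g s
  rw [hmin]
  unfold mixtureObjective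
  linarith

/-- The mixture self-paced regularizer `f^M(v,λ,γ) = γ²/(v + γ/λ)`: for
`ℓ > 0`, the minimizer over `[0,1]` of `v ↦ vℓ + f^M(v,λ,γ)` is `1` if
`ℓ ≤ (λγ/(λ+γ))²`, `0` if `ℓ ≥ λ²`, and `γ(1/√ℓ - 1/λ)` in between. -/
theorem mixture_sp_regularizer_optimal_weight
    (lam gam : ℝ) (hlam : 0 < lam) (hgam : 0 < gam) (ℓ : ℝ) (hℓ : 0 < ℓ) :
    (ℓ ≤ (lam * gam / (lam + gam)) ^ 2 →
      IsMinOn (fun v : ℝ => v * ℓ + gam ^ 2 / (v + gam / lam))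
        (Set.Icc (0 : ℝ) 1) 1) ∧
    (lam ^ 2 ≤ ℓ →
      IsMinOn (fun v : ℝ => v * ℓ + gam ^ 2 / (v + gam / lam))
        (Set.Icc (0 : ℝ) 1) 0) ∧
    ((lam * gam / (lam + gam)) ^ 2 < ℓ → ℓ < lam ^ 2 →
      IsMinOn (fun v : ℝ => v * ℓ + gam ^ 2 / (v + gam / lam))
        (Set.Icc (0 : ℝ) 1) (gam * (1 / Real.sqrt ℓ - 1 / lam))) := by
  have hc : 0 < gam / lam := by positivity
  refine ⟨fun h => ?_, fun h => ?_, fun _ _ => ?_⟩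
  · have hthreshold : lam * gam / (lam + gam) = gam / (1 + gam / lam) := by
      field_simp
    rw [hthreshold, div_pow, le_div_iff₀ (by positivity)] at h
    exact (isMinOn_mixtureObjective_Ioc (sq_nonneg gam) h).on_subset
      fun v hv => ⟨by linarith [hv.1], hv.2⟩
  · have hthreshold : gam ^ 2 = lam ^ 2 * (gam / lam) ^ 2 := by
      field_simp
    refine (isMinOn_mixtureObjective_Ici (sq_nonneg gam) (by simpa using hc) ?_).on_subset
      fun v hv => hv.1
    rw [zero_add, hthreshold]
    gcongr
  · rw [show gam * (1 / √ℓ - 1 / lam) = gam / √ℓ - gam / lam by ring]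
    exact (isMinOn_mixtureObjective_Ioi hℓ).on_subset
      fun v hv => show -(gam / lam) < v by linarith [hv.1]
end

section
/- Let λ > 0 and α > 0, and define f^LOG(v,λ,α) = (1/α)·((1+αλ)·log((1+αλ)/v) − (1+αλ) + v). For every ℓ ≥ 0, the unique minimizer over (0,1] of v ↦ vℓ + f^LOG(v,λ,α) is v = 1 if ℓ ≤ λ and v = (1+αλ)/(1+αℓ) if ℓ > λ. -/
/-!
Up to the factor `1/α > 0` and an additive constant, the objective is `h v = b v - c log v` with
`b = 1 + αℓ` and `c = 1 + αλ`. This function is strictly convex with its global minimum at `c / b`,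
which lies in `(0,1]` exactly when `ℓ > λ`; otherwise `c ≥ b` gives `h v - h 1 ≥ c (v - 1 - log v)`
on `(0,1]`. Both cases reduce to `log t < t - 1` for `t ≠ 1`.
-/

open Real Set

theorem isMinOn_and_eq_of_forall_ne_lt {α β : Type*} [Preorder β] {f : α → β} {s : Set α} {w : α}
    (hw : w ∈ s) (hlt : ∀ v ∈ s, v ≠ w → f w < f v) :
    IsMinOn f s w ∧ ∀ u ∈ s, IsMinOn f s u → u = w := by
  refine ⟨fun v hv => ?_, fun u hu hmin => ?_⟩
  · rcases eq_or_ne v w with rfl | hne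
    · exact le_rfl
    · exact (hlt v hv hne).le
  · by_contra hne
    exact (hlt u hu hne).not_ge (hmin hw)

section LinearSubLog

variable {b c v : ℝ}

theorem mul_div_sub_mul_log_div_lt (hb : 0 < b) (hc : 0 < c) (hv : 0 < v) (hne : v ≠ c / b) :
    b * (c / b) - c * log (c / b) < b * v - c * log v := by
  set t := b * v / c with ht
  have ht0 : 0 < t := by positivity
  have ht1 : t ≠ 1 := by
    rw [ht, Ne, div_eq_one_iff_eq hc.ne']
    exact fun h => hne (by field_simp; linarith)
  have hlog_t : log t = log b + log v - log c := by
    rw [ht, log_div (by positivity) hc.ne', log_mul hb.ne' hv.ne']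
  have hsub : b * v - c * log v - (b * (c / b) - c * log (c / b)) = c * (t - 1 - log t) := by
    rw [log_div hc.ne' hb.ne', hlog_t, ht]
    field_simp
    ring
  have hpos : 0 < c * (t - 1 - log t) := mul_pos hc (by linarith [log_lt_sub_one_of_pos ht0 ht1])
  linarith

theorem mul_one_sub_mul_log_one_lt (hbc : b ≤ c) (hc : 0 < c) (hv : v ∈ Ioc 0 1) (hne : v ≠ 1) :
    b * 1 - c * log 1 < b * v - c * log v := by
  have hlog : c * log v < c * (v - 1) := mul_lt_mul_of_pos_left (log_lt_sub_one_of_pos hv.1 hne) hc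
  rw [log_one]
  linarith [mul_nonneg (sub_nonneg.2 hbc) (sub_nonneg.2 hv.2)]

end LinearSubLog

theorem log_sp_objective_eq (lam α ℓ : ℝ) (hα : α ≠ 0) {v : ℝ} (hv : v ≠ 0) (hc : 1 + α * lam ≠ 0) :
    v * ℓ + (1 / α) * ((1 + α * lam) * log ((1 + α * lam) / v) - (1 + α * lam) + v) =
      ((1 + α * ℓ) * v - (1 + α * lam) * log v) / α +
        ((1 + α * lam) * log (1 + α * lam) - (1 + α * lam)) / α := by
  rw [log_div hc hv]
  field_simp
  ring

theorem log_sp_regularizer_optimal_weight_general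
    (lam α : ℝ) (hlam : 0 < lam) (hα : 0 < α) (ℓ : ℝ) :
    (if ℓ ≤ lam then (1 : ℝ) else (1 + α * lam) / (1 + α * ℓ)) ∈
      Set.Ioc (0 : ℝ) 1 ∧
    IsMinOn
      (fun v : ℝ => v * ℓ +
        (1 / α) * ((1 + α * lam) * Real.log ((1 + α * lam) / v)
          - (1 + α * lam) + v))
      (Set.Ioc (0 : ℝ) 1)
      (if ℓ ≤ lam then (1 : ℝ) else (1 + α * lam) / (1 + α * ℓ)) ∧
    (∀ u ∈ Set.Ioc (0 : ℝ) 1,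
      IsMinOn
        (fun v : ℝ => v * ℓ +
          (1 / α) * ((1 + α * lam) * Real.log ((1 + α * lam) / v)
            - (1 + α * lam) + v))
        (Set.Ioc (0 : ℝ) 1) u →
      u = if ℓ ≤ lam then (1 : ℝ) else (1 + α * lam) / (1 + α * ℓ)) := by
  set w := if ℓ ≤ lam then (1 : ℝ) else (1 + α * lam) / (1 + α * ℓ)
  have hc : 0 < 1 + α * lam := by positivity
  have hw : w ∈ Ioc 0 1 ∧ ∀ v ∈ Ioc (0 : ℝ) 1, v ≠ w →
      (1 + α * ℓ) * w - (1 + α * lam) * log w < (1 + α * ℓ) * v - (1 + α * lam) * log v := by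
    by_cases hℓ : ℓ ≤ lam
    · simp only [w, if_pos hℓ]
      refine ⟨right_mem_Ioc.2 one_pos, fun v hv hne => ?_⟩
      simpa using mul_one_sub_mul_log_one_lt (by gcongr) hc hv hne
    · have hbc : 1 + α * lam < 1 + α * ℓ := by gcongr; exact lt_of_not_ge hℓ
      simp only [w, if_neg hℓ]
      refine ⟨⟨div_pos hc (by linarith), (div_le_one (by linarith)).2 hbc.le⟩, fun v hv hne => ?_⟩
      exact mul_div_sub_mul_log_div_lt (by linarith) hc hv.1 hne
  refine ⟨hw.1, isMinOn_and_eq_of_forall_ne_lt hw.1 fun v hv hne => ?_⟩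
  simp only [log_sp_objective_eq lam α ℓ hα.ne' hv.1.ne' hc.ne',
    log_sp_objective_eq lam α ℓ hα.ne' hw.1.1.ne' hc.ne']
  exact add_lt_add_left (div_lt_div_of_pos_right (hw.2 v hv hne) hα) _

/-- The optimal weight of the LOG self-paced regularizer: for `ℓ ≥ 0`, the
unique minimizer over `(0,1]` of `v ↦ vℓ + f^LOG(v,λ,α)` is `1` if `ℓ ≤ λ`
and `(1+αλ)/(1+αℓ)` if `ℓ > λ`. -/
theorem log_sp_regularizer_optimal_weight
    (lam α : ℝ) (hlam : 0 < lam) (hα : 0 < α) (ℓ : ℝ) (hℓ : 0 ≤ ℓ) :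
    (if ℓ ≤ lam then (1 : ℝ) else (1 + α * lam) / (1 + α * ℓ)) ∈
      Set.Ioc (0 : ℝ) 1 ∧
    IsMinOn
      (fun v : ℝ => v * ℓ +
        (1 / α) * ((1 + α * lam) * Real.log ((1 + α * lam) / v)
          - (1 + α * lam) + v))
      (Set.Ioc (0 : ℝ) 1)
      (if ℓ ≤ lam then (1 : ℝ) else (1 + α * lam) / (1 + α * ℓ)) ∧
    (∀ u ∈ Set.Ioc (0 : ℝ) 1,
      IsMinOn
        (fun v : ℝ => v * ℓ +
          (1 / α) * ((1 + α * lam) * Real.log ((1 + α * lam) / v)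
            - (1 + α * lam) + v))
        (Set.Ioc (0 : ℝ) 1) u →
      u = if ℓ ≤ lam then (1 : ℝ) else (1 + α * lam) / (1 + α * ℓ)) :=
  log_sp_regularizer_optimal_weight_general lam α hlam hα ℓ
end

section
/- Let λ > 0 and α > 0, and define f^EXP(v,λ,α) = (1/α)·(v·log(v/exp(αλ)) − v + exp(αλ)). For every ℓ ≥ 0, the unique minimizer over (0,1] of v ↦ vℓ + f^EXP(v,λ,α) is v = 1 if ℓ ≤ λ and v = exp(−α(ℓ−λ)) if ℓ > λ. -/
/-!
Up to the factor `1/α > 0` and an additive constant, the objective is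
`h v = v log v - v + c v` with `c = α (ℓ - λ)`. Its unconstrained minimizer is `exp (-c)`,
and for every `w > 0`
`h v - h w = (v log v - v log w - v + w) + (v - w) (c + log w)`,
where the first term is a Kullback–Leibler divergence, positive for `v ≠ w`. The second term
vanishes at `w = exp (-c)`, and at `w = 1` it is `(v - 1) c ≥ 0` when `c ≤ 0` and `v ≤ 1`.
-/

open Real Set InformationTheory

lemma mul_log_sub_mul_log_sub_add_pos {v w : ℝ} (hv : 0 < v) (hw : 0 < w) (hne : v ≠ w) :
    0 < v * log v - v * log w - v + w := by
  have hkl : 0 < klFun (v / w) := by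
    refine (klFun_nonneg (div_pos hv hw).le).lt_of_ne' ?_
    rwa [ne_eq, klFun_eq_zero_iff (div_pos hv hw).le, div_eq_one_iff_eq hw.ne']
  have hrepr : v * log v - v * log w - v + w = w * klFun (v / w) := by
    rw [klFun_apply, log_div hv.ne' hw.ne']
    field_simp
    ring
  exact hrepr ▸ mul_pos hw hkl

lemma isMinOn_and_unique_of_forall_ne_lt {ι β : Type*} [Preorder β] {f : ι → β} {s : Set ι}
    {w : ι}    (hw : w ∈ s) (hlt : ∀ v ∈ s, v ≠ w → f w < f v) :
    IsMinOn f s w ∧ ∀ u ∈ s, IsMinOn f s u → u = w := by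
  refine ⟨isMinOn_iff.mpr fun v hv => ?_, fun u hu humin => ?_⟩
  · rcases eq_or_ne v w with rfl | hne
    · exact le_rfl
    · exact (hlt v hv hne).le
  · by_contra hne
    exact (hlt u hu hne).not_ge (humin hw)

/-- The minimizer over `(0, 1]` of `v ↦ v log v - v + c v`. -/
noncomputable def expWeight (c : ℝ) : ℝ := if c ≤ 0 then 1 else exp (-c)

lemma expWeight_mem_Ioc (c : ℝ) : expWeight c ∈ Ioc 0 1 := by
  unfold expWeight
  split_ifs with hc
  · exact ⟨one_pos, le_rfl⟩
  · exact ⟨exp_pos _, exp_le_one_iff.mpr (by linarith)⟩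

lemma expWeight_lt_of_ne (c : ℝ) {v : ℝ} (hv : v ∈ Ioc 0 1) (hne : v ≠ expWeight c) :
    expWeight c * log (expWeight c) - expWeight c + c * expWeight c
      < v * log v - v + c * v := by
  set w := expWeight c
  have hgibbs := mul_log_sub_mul_log_sub_add_pos hv.1 (expWeight_mem_Ioc c).1 hne
  have hlinear : 0 ≤ (v - w) * (c + log w) := by
    by_cases hc : c ≤ 0
    · have hw : w = 1 := if_pos hc
      rw [hw, log_one, add_zero]
      exact mul_nonneg_of_nonpos_of_nonpos (by linarith [hv.2]) hc
    · have hw : w = exp (-c) := if_neg hc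
      rw [hw, log_exp, add_neg_cancel, mul_zero]
  linear_combination hgibbs + hlinear

lemma exp_sp_objective_eq (α lam ℓ v : ℝ) (hα : α ≠ 0) :
    v * ℓ + (1 / α) * (v * log (v / exp (α * lam)) - v + exp (α * lam))
      = (1 / α) * (v * log v - v + α * (ℓ - lam) * v) + (1 / α) * exp (α * lam) := by
  rcases eq_or_ne v 0 with rfl | hv
  · simp
  rw [log_div hv (exp_pos _).ne', log_exp]
  field_simp
  ring

theorem exp_sp_regularizer_optimal_weight_general
    (lam α : ℝ) (hα : 0 < α) (ℓ : ℝ) :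
    (if ℓ ≤ lam then (1 : ℝ) else Real.exp (-(α * (ℓ - lam)))) ∈
      Set.Ioc (0 : ℝ) 1 ∧
    IsMinOn
      (fun v : ℝ => v * ℓ +
        (1 / α) * (v * Real.log (v / Real.exp (α * lam))
          - v + Real.exp (α * lam)))
      (Set.Ioc (0 : ℝ) 1)
      (if ℓ ≤ lam then (1 : ℝ) else Real.exp (-(α * (ℓ - lam)))) ∧
    (∀ u ∈ Set.Ioc (0 : ℝ) 1,
      IsMinOn
        (fun v : ℝ => v * ℓ +
          (1 / α) * (v * Real.log (v / Real.exp (α * lam))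
            - v + Real.exp (α * lam)))
        (Set.Ioc (0 : ℝ) 1) u →
      u = if ℓ ≤ lam then (1 : ℝ) else Real.exp (-(α * (ℓ - lam)))) := by
  have hweight :
      (if ℓ ≤ lam then (1 : ℝ) else exp (-(α * (ℓ - lam)))) = expWeight (α * (ℓ - lam)) := by
    simp only [expWeight, mul_nonpos_iff_pos_imp_nonpos, hα, hα.le, true_implies, implies_true,
      and_true, sub_nonpos]
  rw [hweight]
  have hmem := expWeight_mem_Ioc (α * (ℓ - lam))
  refine ⟨hmem, isMinOn_and_unique_of_forall_ne_lt hmem fun v hv hne => ?_⟩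
  simp only [exp_sp_objective_eq α lam ℓ _ hα.ne']
  gcongr (1 / α) * ?_ + _
  exact expWeight_lt_of_ne _ hv hne

/-- The optimal weight of the EXP self-paced regularizer: for `ℓ ≥ 0`, the
unique minimizer over `(0,1]` of `v ↦ vℓ + f^EXP(v,λ,α)` is `1` if `ℓ ≤ λ`
and `exp(-α(ℓ-λ))` if `ℓ > λ`. -/
theorem exp_sp_regularizer_optimal_weight
    (lam α : ℝ) (hlam : 0 < lam) (hα : 0 < α) (ℓ : ℝ) (hℓ : 0 ≤ ℓ) :
    (if ℓ ≤ lam then (1 : ℝ) else Real.exp (-(α * (ℓ - lam)))) ∈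
      Set.Ioc (0 : ℝ) 1 ∧
    IsMinOn
      (fun v : ℝ => v * ℓ +
        (1 / α) * (v * Real.log (v / Real.exp (α * lam))
          - v + Real.exp (α * lam)))
      (Set.Ioc (0 : ℝ) 1)
      (if ℓ ≤ lam then (1 : ℝ) else Real.exp (-(α * (ℓ - lam)))) ∧
    (∀ u ∈ Set.Ioc (0 : ℝ) 1,
      IsMinOn
        (fun v : ℝ => v * ℓ +
          (1 / α) * (v * Real.log (v / Real.exp (α * lam))
            - v + Real.exp (α * lam)))
        (Set.Ioc (0 : ℝ) 1) u →
      u = if ℓ ≤ lam then (1 : ℝ) else Real.exp (-(α * (ℓ - lam)))) :=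
  exp_sp_regularizer_optimal_weight_general lam α hα ℓ
end

section
/- Let λ > 0 and α > 0, and let v*(t) = 1 for 0 ≤ t ≤ λ and v*(t) = exp(−α(t−λ)) for t > λ. Then for every ℓ ≥ 0, ∫₀^ℓ v*(t) dt equals ℓ if ℓ ≤ λ, and equals λ + (1/α)·(1 − exp(−α(ℓ−λ))) if ℓ > λ. In particular, for ℓ > λ this latent loss equals the exponential penalty (1/γ)·(1 − exp(−αℓ)) with 1/γ = exp(αλ)/α, plus a constant independent of ℓ. -/
/-!
The weight `v*` is continuous (both branches equal `1` at `t = λ`), so the integral over `[0, ℓ]`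
splits at `λ` into `λ` plus the integral of `exp (-α (t - λ))` over `[λ, ℓ]`, which is computed
from the antiderivative `-exp (-α (t - λ)) / α`. Since `exp (-α (ℓ - λ)) = exp (αλ) exp (-αℓ)`,
the second branch differs from the exponential penalty by `λ + 1/α - exp (αλ)/α`.
-/

open MeasureTheory

theorem integral_exp_neg_mul_sub {α : ℝ} (hα : α ≠ 0) (c a b : ℝ) :
    ∫ t in a..b, Real.exp (-(α * (t - c))) =
      (1 / α) * (Real.exp (-(α * (a - c))) - Real.exp (-(α * (b - c)))) := by
  have hderiv : ∀ t ∈ Set.uIcc a b,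
      HasDerivAt (fun t => -(1 / α) * Real.exp (-(α * (t - c))))
        (Real.exp (-(α * (t - c)))) t := by
    intro t _
    have hinner : HasDerivAt (fun t : ℝ => -(α * (t - c))) (-α) t := by
      simpa using ((((hasDerivAt_id t).sub_const c).const_mul α).const_mul (-1))
    refine (hinner.exp.const_mul (-(1 / α))).congr_deriv ?_
    field_simp
  rw [intervalIntegral.integral_eq_sub_of_hasDerivAt hderiv
    ((by fun_prop : Continuous fun t => Real.exp (-(α * (t - c)))).intervalIntegrable a b)]
  ring

/-- The optimal weight `v*(·, λ, α)` of the EXP self-paced regularizer. -/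
noncomputable def expSPWeight (lam α t : ℝ) : ℝ :=
  if t ≤ lam then 1 else Real.exp (-(α * (t - lam)))

namespace expSPWeight

variable {lam α t : ℝ}

theorem of_le (ht : t ≤ lam) : expSPWeight lam α t = 1 := if_pos ht

theorem of_ge (ht : lam ≤ t) : expSPWeight lam α t = Real.exp (-(α * (t - lam))) := by
  rcases ht.eq_or_lt with rfl | hlt
  · simp [expSPWeight]
  · exact if_neg hlt.not_ge

theorem continuous (lam α : ℝ) : Continuous (expSPWeight lam α) :=
  Continuous.if_le continuous_const (by fun_prop) continuous_id continuous_const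
    (fun t ht => by simp [ht])

theorem integral_of_le {ℓ : ℝ} (hℓ : 0 ≤ ℓ) (hℓlam : ℓ ≤ lam) :
    ∫ t in (0 : ℝ)..ℓ, expSPWeight lam α t = ℓ := by
  rw [intervalIntegral.integral_congr (g := fun _ => (1 : ℝ)) fun t ht =>
    of_le ((Set.uIcc_of_le hℓ ▸ ht).2.trans hℓlam)]
  simp

theorem integral_of_lt (hα : α ≠ 0) (hlam : 0 ≤ lam) {ℓ : ℝ} (hℓ : lam < ℓ) :
    ∫ t in (0 : ℝ)..ℓ, expSPWeight lam α t =
      lam + (1 / α) * (1 - Real.exp (-(α * (ℓ - lam)))) := by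
  have hint := (continuous lam α).intervalIntegrable (μ := volume)
  rw [← intervalIntegral.integral_add_adjacent_intervals (hint 0 lam) (hint lam ℓ),
    integral_of_le hlam le_rfl,
    intervalIntegral.integral_congr fun t ht => of_ge (Set.uIcc_of_le hℓ.le ▸ ht).1,
    integral_exp_neg_mul_sub hα]
  simp

end expSPWeight

theorem add_one_div_mul_one_sub_exp_eq {lam α : ℝ} (ℓ : ℝ) :
    lam + (1 / α) * (1 - Real.exp (-(α * (ℓ - lam)))) =
      (Real.exp (α * lam) / α) * (1 - Real.exp (-(α * ℓ))) +
        (lam + 1 / α - Real.exp (α * lam) / α) := by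
  have hsplit : Real.exp (-(α * (ℓ - lam))) = Real.exp (α * lam) * Real.exp (-(α * ℓ)) := by
    rw [← Real.exp_add]
    ring_nf
  rw [hsplit]
  ring

/-- The latent SPL loss of the EXP self-paced regularizer:
`∫₀^ℓ v*(t) dt = ℓ` if `ℓ ≤ λ`, and `= λ + (1/α)(1 - exp(-α(ℓ-λ)))` if
`ℓ > λ`; in the latter case it equals the exponential penalty
`(exp(αλ)/α)(1 - exp(-αℓ))` plus a constant independent of `ℓ`. -/
theorem exp_sp_latent_loss
    (lam α : ℝ) (hlam : 0 < lam) (hα : 0 < α)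
    (vstar : ℝ → ℝ)
    (hv : ∀ t, vstar t = if t ≤ lam then 1 else Real.exp (-(α * (t - lam)))) :
    (∀ ℓ : ℝ, 0 ≤ ℓ →
      (∫ t in (0 : ℝ)..ℓ, vstar t) =
        if ℓ ≤ lam then ℓ
        else lam + (1 / α) * (1 - Real.exp (-(α * (ℓ - lam))))) ∧
    (∃ C : ℝ, ∀ ℓ : ℝ, lam < ℓ →
      (∫ t in (0 : ℝ)..ℓ, vstar t) =
        (Real.exp (α * lam) / α) * (1 - Real.exp (-(α * ℓ))) + C) := by
  obtain rfl : vstar = expSPWeight lam α := funext hv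
  refine ⟨fun ℓ hℓ => ?_, ⟨lam + 1 / α - Real.exp (α * lam) / α, fun ℓ hℓ => ?_⟩⟩
  · split_ifs with hℓlam
    · exact expSPWeight.integral_of_le hℓ hℓlam
    · exact expSPWeight.integral_of_lt hα.ne' hlam.le (not_le.mp hℓlam)
  · rw [expSPWeight.integral_of_lt hα.ne' hlam.le hℓ, add_one_div_mul_one_sub_exp_eq]
end

section
/- Let v : ℝ → ℝ be nonnegative and antitone on [0,∞), and define F(ℓ) = ∫₀^ℓ v(t) dt for ℓ ≥ 0. Let W be any set, let ℓ₁,…,ℓₙ : W → [0,∞) be loss functions, and let w₀, w₁ ∈ W satisfy ∑_{i=1}^n v(ℓᵢ(w₀))·ℓᵢ(w₁) ≤ ∑_{i=1}^n v(ℓᵢ(w₀))·ℓᵢ(w₀) (i.e., w₁ does not increase the weighted loss with weights v(ℓᵢ(w₀))). Then ∑_{i=1}^n F(ℓᵢ(w₁)) ≤ ∑_{i=1}^n F(ℓᵢ(w₀)). -/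
open MeasureTheory

/-
The primitive `F` of a nonincreasing `v` is concave on `[0, ∞)`, so it lies below its tangent
line at `ℓᵢ(w₀)`: `F(ℓᵢ(w₁)) ≤ F(ℓᵢ(w₀)) + v(ℓᵢ(w₀)) (ℓᵢ(w₁) - ℓᵢ(w₀))`. Summing over `i`, the
linear terms are exactly the decrease of the weighted loss, which is nonpositive.
-/

lemma AntitoneOn.intervalIntegral_le_mul_sub {v : ℝ → ℝ} {s : Set ℝ} (hv : AntitoneOn v s)
    (hs : s.OrdConnected) {a b : ℝ} (ha : a ∈ s) (hb : b ∈ s) :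
    ∫ t in a..b, v t ≤ v a * (b - a) := by
  have hint : IntervalIntegrable v volume a b :=
    (hv.mono (hs.uIcc_subset ha hb)).intervalIntegrable
  rcases le_total a b with hab | hba
  · calc ∫ t in a..b, v t ≤ ∫ _ in a..b, v a :=
          intervalIntegral.integral_mono_on hab hint intervalIntegrable_const fun t ht =>
            hv ha (hs.out ha hb ht) ht.1
      _ = v a * (b - a) := by rw [intervalIntegral.integral_const, smul_eq_mul, mul_comm]
  · have hge : ∫ _ in b..a, v a ≤ ∫ t in b..a, v t :=
      intervalIntegral.integral_mono_on hba intervalIntegrable_const hint.symm fun t ht =>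
        hv (hs.out hb ha ht) ha ht.2
    rw [intervalIntegral.integral_const, smul_eq_mul] at hge
    rw [intervalIntegral.integral_symm]
    linarith

lemma AntitoneOn.integral_sub_integral_le_mul_sub {v : ℝ → ℝ} (hv : AntitoneOn v (Set.Ici 0))
    {a b : ℝ} (ha : 0 ≤ a) (hb : 0 ≤ b) :
    (∫ t in (0 : ℝ)..b, v t) - ∫ t in (0 : ℝ)..a, v t ≤ v a * (b - a) := by
  have hint {x : ℝ} (hx : 0 ≤ x) : IntervalIntegrable v volume 0 x :=
    (hv.mono (Set.ordConnected_Ici.uIcc_subset le_rfl hx)).intervalIntegrable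
  rw [intervalIntegral.integral_interval_sub_left (hint hb) (hint ha)]
  exact hv.intervalIntegral_le_mul_sub Set.ordConnected_Ici ha hb

theorem spl_mm_step_descent_general
    (v : ℝ → ℝ)
    (hv_antitone : AntitoneOn v (Set.Ici (0 : ℝ)))
    (F : ℝ → ℝ) (hF : ∀ x, F x = ∫ t in (0 : ℝ)..x, v t)
    {W : Type*} (n : ℕ) (ℓ : Fin n → W → ℝ)
    (hℓ_nonneg : ∀ i w, 0 ≤ ℓ i w)
    (w₀ w₁ : W)
    (hstep : ∑ i, v (ℓ i w₀) * ℓ i w₁ ≤ ∑ i, v (ℓ i w₀) * ℓ i w₀) :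
    ∑ i, F (ℓ i w₁) ≤ ∑ i, F (ℓ i w₀) := by
  have htangent : ∀ i, F (ℓ i w₁) - F (ℓ i w₀) ≤ v (ℓ i w₀) * (ℓ i w₁ - ℓ i w₀) := fun i => by
    simpa only [hF] using
      hv_antitone.integral_sub_integral_le_mul_sub (hℓ_nonneg i w₀) (hℓ_nonneg i w₁)
  have hsum := Finset.sum_le_sum fun i (_ : i ∈ Finset.univ) => htangent i
  simp only [Finset.sum_sub_distrib, mul_sub] at hsum
  linarith

/-- MM descent step for SPL: if the update `w₁` does not increase the weighted
loss with weights `v(ℓᵢ(w₀))`, then the latent SPL objective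
`∑ᵢ F(ℓᵢ(w))`, with `F(ℓ) = ∫₀^ℓ v(t) dt`, does not increase either. -/
theorem spl_mm_step_descent
    (v : ℝ → ℝ)
    (hv_nonneg : ∀ t ∈ Set.Ici (0 : ℝ), 0 ≤ v t)
    (hv_antitone : AntitoneOn v (Set.Ici (0 : ℝ)))
    (F : ℝ → ℝ) (hF : ∀ x, F x = ∫ t in (0 : ℝ)..x, v t)
    {W : Type*} (n : ℕ) (ℓ : Fin n → W → ℝ)
    (hℓ_nonneg : ∀ i w, 0 ≤ ℓ i w)
    (w₀ w₁ : W)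
    (hstep : ∑ i, v (ℓ i w₀) * ℓ i w₁ ≤ ∑ i, v (ℓ i w₀) * ℓ i w₀) :
    ∑ i, F (ℓ i w₁) ≤ ∑ i, F (ℓ i w₀) :=
  spl_mm_step_descent_general v hv_antitone F hF n ℓ hℓ_nonneg w₀ w₁ hstep
end

section
/- Let v : ℝ → ℝ be nonnegative and antitone on [0,∞), and define F(ℓ) = ∫₀^ℓ v(t) dt for ℓ ≥ 0. Let W be any set, let ℓ₁,…,ℓₙ : W → [0,∞) be loss functions, and let (w^k)_{k∈ℕ} be a sequence in W such that for every k, ∑_{i=1}^n v(ℓᵢ(w^k))·ℓᵢ(w^{k+1}) ≤ ∑_{i=1}^n v(ℓᵢ(w^k))·ℓᵢ(w^k). Then the sequence of latent objective values a_k = ∑_{i=1}^n F(ℓᵢ(w^k)) is monotonically nonincreasing, bounded below by 0, and hence convergent. -/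
open MeasureTheory Filter

/-! A primitive `F` of a nonnegative nonincreasing `v` is concave, so it lies below its tangent
line: `F y ≤ F x + v x * (y - x)`. Summing over the losses, the latent objective is majorized
at `w^k` by the weighted loss with weights `v (ℓᵢ (w^k))`, up to a constant; a step that does
not increase the weighted loss therefore does not increase the latent objective. Being
nonincreasing and nonnegative, the objective converges. -/

section Tangent

variable {v : ℝ → ℝ} {c : ℝ}

theorem AntitoneOn.intervalIntegrable_of_mem_Ici (hv : AntitoneOn v (Set.Ici c))
    {p q : ℝ} (hp : c ≤ p) (hq : c ≤ q) : IntervalIntegrable v volume p q :=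
  (hv.mono fun _ ht => (le_min hp hq).trans ht.1).intervalIntegrable

theorem AntitoneOn.integral_le_mul_sub (hv : AntitoneOn v (Set.Ici c))
    {x y : ℝ} (hx : c ≤ x) (hy : c ≤ y) : ∫ t in x..y, v t ≤ v x * (y - x) := by
  rcases le_total x y with hxy | hyx
  · calc ∫ t in x..y, v t ≤ ∫ _ in x..y, v x :=
          intervalIntegral.integral_mono_on hxy (hv.intervalIntegrable_of_mem_Ici hx hy)
            intervalIntegrable_const fun t ht => hv hx (hx.trans ht.1) ht.1
      _ = v x * (y - x) := by rw [intervalIntegral.integral_const, smul_eq_mul, mul_comm]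
  · have : v x * (x - y) ≤ ∫ t in y..x, v t :=
      calc v x * (x - y) = ∫ _ in y..x, v x := by
            rw [intervalIntegral.integral_const, smul_eq_mul, mul_comm]
        _ ≤ ∫ t in y..x, v t :=
          intervalIntegral.integral_mono_on hyx intervalIntegrable_const
            (hv.intervalIntegrable_of_mem_Ici hy hx) fun t ht => hv (hy.trans ht.1) hx ht.2
    rw [intervalIntegral.integral_symm]
    linarith

theorem AntitoneOn.integral_le_integral_add_mul_sub (hv : AntitoneOn v (Set.Ici c))
    {x y : ℝ} (hx : c ≤ x) (hy : c ≤ y) :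
    ∫ t in c..y, v t ≤ (∫ t in c..x, v t) + v x * (y - x) := by
  rw [← intervalIntegral.integral_add_adjacent_intervals
    (hv.intervalIntegrable_of_mem_Ici le_rfl hx) (hv.intervalIntegrable_of_mem_Ici hx hy)]
  linarith [hv.integral_le_mul_sub hx hy]

end Tangent

/-- The majorization–minimization principle for a separable objective `∑ᵢ f (xᵢ)` whose
summands admit the linear majorizers `y ↦ f x + g x * (y - x)`. -/
theorem Finset.sum_le_sum_of_linear_majorizer {ι : Type*} (s : Finset ι) {S : Set ℝ}
    {f g : ℝ → ℝ} (hmaj : ∀ x ∈ S, ∀ y ∈ S, f y ≤ f x + g x * (y - x))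
    {x y : ι → ℝ} (hx : ∀ i ∈ s, x i ∈ S) (hy : ∀ i ∈ s, y i ∈ S)
    (hstep : ∑ i ∈ s, g (x i) * y i ≤ ∑ i ∈ s, g (x i) * x i) :
    ∑ i ∈ s, f (y i) ≤ ∑ i ∈ s, f (x i) := by
  have hdescent : ∑ i ∈ s, g (x i) * (y i - x i) ≤ 0 := by
    simp only [mul_sub, Finset.sum_sub_distrib]
    linarith
  calc ∑ i ∈ s, f (y i) ≤ ∑ i ∈ s, (f (x i) + g (x i) * (y i - x i)) :=
        Finset.sum_le_sum fun i hi => hmaj _ (hx i hi) _ (hy i hi)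
    _ ≤ ∑ i ∈ s, f (x i) := by
        rw [Finset.sum_add_distrib]
        linarith

/-- Convergence of the SPL/MM iteration: if each iterate `w^{k+1}` does not
increase the weighted loss with weights `v(ℓᵢ(w^k))`, then the latent SPL
objective values `a_k = ∑ᵢ F(ℓᵢ(w^k))` form a nonincreasing sequence bounded
below by `0`, hence convergent. -/
theorem spl_mm_iteration_convergence
    (v : ℝ → ℝ)
    (hv_nonneg : ∀ t ∈ Set.Ici (0 : ℝ), 0 ≤ v t)
    (hv_antitone : AntitoneOn v (Set.Ici (0 : ℝ)))
    (F : ℝ → ℝ) (hF : ∀ x, F x = ∫ t in (0 : ℝ)..x, v t)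
    {W : Type*} (n : ℕ) (ℓ : Fin n → W → ℝ)
    (hℓ_nonneg : ∀ i w, 0 ≤ ℓ i w)
    (w : ℕ → W)
    (hstep : ∀ k, ∑ i, v (ℓ i (w k)) * ℓ i (w (k + 1)) ≤
      ∑ i, v (ℓ i (w k)) * ℓ i (w k))
    (a : ℕ → ℝ) (ha : ∀ k, a k = ∑ i, F (ℓ i (w k))) :
    Antitone a ∧ (∀ k, 0 ≤ a k) ∧ ∃ L : ℝ, Tendsto a atTop (nhds L) := by
  obtain rfl : F = fun x => ∫ t in (0 : ℝ)..x, v t := funext hF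
  have hanti : Antitone a := antitone_nat_of_succ_le fun k => by
    rw [ha, ha]
    exact Finset.univ.sum_le_sum_of_linear_majorizer
      (fun _ hx _ hy => hv_antitone.integral_le_integral_add_mul_sub hx hy)
      (fun i _ => hℓ_nonneg i _) (fun i _ => hℓ_nonneg i _) (hstep k)
  have hnonneg : ∀ k, 0 ≤ a k := fun k => ha k ▸ Finset.sum_nonneg fun i _ =>
    intervalIntegral.integral_nonneg (hℓ_nonneg i _) fun t ht => hv_nonneg t ht.1
  exact ⟨hanti, hnonneg, _, tendsto_atTop_ciInf hanti ⟨0, Set.forall_mem_range.2 hnonneg⟩⟩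
end
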